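/- arXiv:1503.01871 — 2 statements merged into one kernel-verified Lean document; each statement's English description precedes it below -/
import Mathlib

section
/- Assume (H1), let x be a strong global solution of the dynamical system, and suppose limsup_{t→∞} λ(t)β(t) < 2μ. Let z ∈ C and v ∈ Az. Then there exist a, b > 0 and t₀ > 0 such that for almost every t ≥ t₀: 2⟨ẋ(t), x(t) − z⟩ + a( ‖ẋ(t)‖² + λ(t)β(t)⟨x(t) − z, B x(t)⟩ + λ(t)β(t)‖B x(t)‖² ) ≤ ( bλ(t)² − 2ηλ(t) ) ‖D x(t) − D z‖² + 2λ(t)⟨z − x(t), v + Dz⟩ + bλ(t)²‖Dz + v‖². -/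
/-!
Write `p = ẋ(t)`, `s = x(t) − z`, `L = λ(t)`, `K = λ(t)β(t)`. The inclusion defining the solution
and `v ∈ Az` give, by monotonicity of `A`,
`0 ≤ ⟪p + s, −p − L(Dx − Dz) − L(Dz + v) − K·Bx⟫`.
The cross terms with `p` are absorbed by Young's inequality, the term `⟪s, Dx − Dz⟫` by the
cocoercivity of `D`, and, since `Bz = 0`, the term `⟪s, Bx⟫` by the cocoercivity of `B`.
What remains is nonpositive as soon as `a ≤ 1/2` and `a + K ≤ (2 − a)μ`, and the hypothesis
`limsup λβ < 2μ` provides such an `a > 0` for all large `t`.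
-/

open scoped RealInnerProductSpace Pointwise
open MeasureTheory Filter

variable {H : Type*} [NormedAddCommGroup H] [InnerProductSpace ℝ H]

/-- A set-valued operator `A : H ⇒ H` (given by its value map) is monotone. -/
def MonotoneOperator (A : H → Set H) : Prop :=
  ∀ ⦃x u y v : H⦄, u ∈ A x → v ∈ A y → (0:ℝ) ≤ ⟪x - y, u - v⟫

/-- `A` is maximally monotone: monotone and without proper monotone extension. -/
def MaximallyMonotone (A : H → Set H) : Prop :=
  MonotoneOperator A ∧ ∀ A' : H → Set H, MonotoneOperator A' → (∀ x, A x ⊆ A' x) → A' = A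

/-- `A` is `γ`-strongly monotone. -/
def StronglyMonotoneOperator (γ : ℝ) (A : H → Set H) : Prop :=
  ∀ ⦃x u y v : H⦄, u ∈ A x → v ∈ A y → γ * ‖x - y‖ ^ 2 ≤ ⟪x - y, u - v⟫

/-- A single-valued operator `T` is `γ`-cocoercive. -/
def Cocoercive (γ : ℝ) (T : H → H) : Prop :=
  ∀ x y : H, γ * ‖T x - T y‖ ^ 2 ≤ ⟪x - y, T x - T y⟫

/-- The normal cone of a set `C` at `z` (empty when `z ∉ C`). -/
def normalCone (C : Set H) (z : H) : Set H :=
  {u | z ∈ C ∧ ∀ y ∈ C, ⟪y - z, u⟫ ≤ (0:ℝ)}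

/-- The support function `σ_C`, with values in `ℝ ∪ {±∞}`. -/
noncomputable def supportFn (C : Set H) (u : H) : EReal :=
  ⨆ y ∈ C, ((⟪y, u⟫ : ℝ) : EReal)

/-- The Fitzpatrick function of a single-valued operator `B`. -/
noncomputable def fitzpatrick (B : H → H) (x u : H) : EReal :=
  ⨆ y : H, ((⟪x, B y⟫ + ⟪y, u⟫ - ⟪y, B y⟫ : ℝ) : EReal)

/-- Conversion of an extended real into `[0,∞]` (negative values go to `0`). -/
noncomputable def erealToENNReal (x : EReal) : ENNReal :=
  if x = ⊤ then ⊤ else ENNReal.ofReal x.toReal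

/-- Absolute continuity of `f` on `[0,b]`, via the `ε`-`η` definition. -/
def AbsolutelyContinuousOnIcc (f : ℝ → H) (b : ℝ) : Prop :=
  ∀ ε > (0:ℝ), ∃ η > (0:ℝ), ∀ (n : ℕ) (a c : Fin n → ℝ),
    (∀ k, 0 ≤ a k ∧ a k ≤ c k ∧ c k ≤ b) →
    (Pairwise fun i j => Disjoint (Set.Ioo (a i) (c i)) (Set.Ioo (a j) (c j))) →
    ∑ k, (c k - a k) < η → ∑ k, ‖f (c k) - f (a k)‖ < ε

/-- A strong global solution `x`, with derivative function `xd`, of the dynamical system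
`ẋ(t) + x(t) = J_{λ(t)A}(x(t) − λ(t)Dx(t) − λ(t)β(t)Bx(t))`, `x(0) = x₀`, where the
resolvent equation is expressed as the differential inclusion
`x(t) − λ(t)Dx(t) − λ(t)β(t)Bx(t) − (ẋ(t)+x(t)) ∈ λ(t) A(ẋ(t)+x(t))`. -/
def IsStrongGlobalSolution (A : H → Set H) (D B : H → H) (lam beta : ℝ → ℝ)
    (x₀ : H) (x xd : ℝ → H) : Prop :=
  (∀ b > (0:ℝ), AbsolutelyContinuousOnIcc x b) ∧ x 0 = x₀ ∧
  ∀ᵐ t ∂(volume.restrict (Set.Ici (0:ℝ))),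
    HasDerivAt x (xd t) t ∧
    x t - lam t • D (x t) - (lam t * beta t) • B (x t) - (xd t + x t)
      ∈ lam t • A (xd t + x t)

/-- The solution set `zer(A + D + N_C)`. -/
def zerSum (A : H → Set H) (D : H → H) (C : Set H) : Set H :=
  {z | ∃ v ∈ A z, ∃ p ∈ normalCone C z, v + D z + p = 0}

theorem MonotoneOperator.inner_nonneg_of_mem_smul {A : H → Set H} (hA : MonotoneOperator A)
    {c : ℝ} (hc : 0 ≤ c) {x y u v : H} (hu : u ∈ c • A x) (hv : v ∈ A y) :
    0 ≤ ⟪x - y, u - c • v⟫ := by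
  obtain ⟨w, hw, rfl⟩ := Set.mem_smul_set.mp hu
  rw [← smul_sub, real_inner_smul_right]
  exact mul_nonneg hc (hA hw hv)

theorem neg_two_mul_inner_le (p q : H) (r c : ℝ) :
    -(2 * (r * c) * ⟪p, q⟫) ≤ r ^ 2 * ‖p‖ ^ 2 + c ^ 2 * ‖q‖ ^ 2 := by
  have h : 0 ≤ ‖r • p + c • q‖ ^ 2 := by positivity
  rw [norm_add_sq_real, norm_smul, norm_smul, real_inner_smul_left, real_inner_smul_right,
    mul_pow, mul_pow, Real.norm_eq_abs, Real.norm_eq_abs, sq_abs, sq_abs] at h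
  linarith

theorem exists_pos_add_le_two_sub_mul {c μ : ℝ} (hμ : 0 < μ) (hc : c < 2 * μ) :
    ∃ a > (0 : ℝ), a ≤ 1 / 2 ∧ a + c ≤ (2 - a) * μ := by
  have hμ1 : 0 < 1 + μ := by linarith
  refine ⟨min (1 / 2) ((2 * μ - c) / (1 + μ)), lt_min (by norm_num) (div_pos (by linarith) hμ1),
    min_le_left _ _, ?_⟩
  have h := (le_div_iff₀ hμ1).mp (min_le_right (1 / 2 : ℝ) ((2 * μ - c) / (1 + μ)))
  linarith

/-- The estimate behind the theorem, for `p = ẋ`, `s = x − z`, `d = Dx − Dz`, `e = Dz + v`,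
`g = Bx`, `L = λ` and `K = λβ`. -/
theorem two_inner_add_le_of_inner_nonneg {p s d e g : H} {L K a η μ : ℝ} (hL : 0 ≤ L)
    (hK : 0 ≤ K) (ha : a ≤ 1 / 2) (haK : a + K ≤ (2 - a) * μ)
    (hmono : 0 ≤ ⟪p + s, -p - L • d - L • e - K • g⟫)
    (hd : η * ‖d‖ ^ 2 ≤ ⟪s, d⟫) (hg : μ * ‖g‖ ^ 2 ≤ ⟪s, g⟫) :
    2 * ⟪p, s⟫ + a * (‖p‖ ^ 2 + K * ⟪s, g⟫ + K * ‖g‖ ^ 2) ≤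
      (4 * L ^ 2 - 2 * η * L) * ‖d‖ ^ 2 + 2 * L * ⟪-s, e⟫ + 4 * L ^ 2 * ‖e‖ ^ 2 := by
  simp only [inner_add_left, inner_sub_right, inner_neg_right, real_inner_smul_right,
    real_inner_self_eq_norm_sq] at hmono
  rw [inner_neg_left, real_inner_comm s p]
  have hpd := neg_two_mul_inner_le p d (1 / 2) (2 * L)
  have hpe := neg_two_mul_inner_le p e (1 / 2) (2 * L)
  have hpg := neg_two_mul_inner_le p g 1 K
  have hLd : L * (η * ‖d‖ ^ 2) ≤ L * ⟪s, d⟫ := mul_le_mul_of_nonneg_left hd hL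
  have hKg : K * ((a + K) * ‖g‖ ^ 2 - (2 - a) * ⟪s, g⟫) ≤ 0 := by
    refine mul_nonpos_of_nonneg_of_nonpos hK ?_
    linarith [mul_le_mul_of_nonneg_left hg (by linarith : (0 : ℝ) ≤ 2 - a),
      mul_le_mul_of_nonneg_right haK (sq_nonneg ‖g‖)]
  have hp : (a - 1 / 2) * ‖p‖ ^ 2 ≤ 0 :=
    mul_nonpos_of_nonpos_of_nonneg (by linarith) (sq_nonneg _)
  linarith

theorem lemma_fej3_general
    (A : H → Set H) (hA : MaximallyMonotone A)
    (η μ : ℝ) (hμ : 0 < μ)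
    (D B : H → H) (hD : Cocoercive η D) (hB : Cocoercive μ B)
    (lam beta : ℝ → ℝ)
    (hlam_pos : ∀ t : ℝ, 0 ≤ t → 0 < lam t) (hbeta_pos : ∀ t : ℝ, 0 ≤ t → 0 < beta t)
    (hls : limsup (fun t => ((lam t * beta t : ℝ) : EReal)) atTop < ((2 * μ : ℝ) : EReal))
    (x₀ : H) (x xd : ℝ → H)
    (hsol : IsStrongGlobalSolution A D B lam beta x₀ x xd)
    (z v : H) (hz : z ∈ {q : H | B q = 0}) (hv : v ∈ A z) :
    ∃ a > (0:ℝ), ∃ b > (0:ℝ), ∃ t₀ > (0:ℝ),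
      ∀ᵐ t ∂(volume.restrict (Set.Ici t₀)),
        2 * ⟪xd t, x t - z⟫ +
            a * (‖xd t‖ ^ 2 + lam t * beta t * ⟪x t - z, B (x t)⟫ +
              lam t * beta t * ‖B (x t)‖ ^ 2) ≤
          (b * lam t ^ 2 - 2 * η * lam t) * ‖D (x t) - D z‖ ^ 2 +
            2 * lam t * ⟪z - x t, v + D z⟫ + b * lam t ^ 2 * ‖D z + v‖ ^ 2 := by
  obtain ⟨c, hlsc, hc⟩ := EReal.lt_iff_exists_real_btwn.mp hls
  obtain ⟨T, hT⟩ := eventually_atTop.mp (eventually_lt_of_limsup_lt hlsc)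
  obtain ⟨a, ha0, ha, hac⟩ := exists_pos_add_le_two_sub_mul hμ (EReal.coe_lt_coe_iff.mp hc)
  refine ⟨a, ha0, 4, by norm_num, max T 1, lt_max_of_lt_right one_pos, ?_⟩
  have hsub : Set.Ici (max T 1) ⊆ Set.Ici 0 := Set.Ici_subset_Ici.mpr (by simp)
  filter_upwards [ae_mono (Measure.restrict_mono hsub le_rfl) hsol.2.2,
    ae_restrict_mem measurableSet_Ici] with t hsolt ht
  obtain ⟨-, hincl⟩ := hsolt
  have ht0 : 0 ≤ t := by linarith [le_max_right T 1, Set.mem_Ici.mp ht]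
  have hL := hlam_pos t ht0
  have hβ := hbeta_pos t ht0
  have hK : lam t * beta t ≤ c := (EReal.coe_lt_coe_iff.mp (hT t (le_of_max_le_left ht))).le
  have hmono := hA.1.inner_nonneg_of_mem_smul hL.le hincl hv
  have hBz : B z = 0 := hz
  have hg := hB (x t) z
  rw [hBz, sub_zero] at hg
  rw [← neg_sub (x t) z, add_comm v (D z)]
  refine two_inner_add_le_of_inner_nonneg hL.le (mul_pos hL hβ).le ha (by linarith) ?_
    (hD (x t) z) hg
  convert hmono using 2 <;> module

/-- Lemma 3: under `limsup_{t→∞} λ(t)β(t) < 2μ` there are `a, b > 0` and `t₀ > 0`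
such that the stated Lyapunov inequality holds for almost every `t ≥ t₀`. -/
theorem lemma_fej3 [CompleteSpace H]
    (A : H → Set H) (hA : MaximallyMonotone A)
    (η μ : ℝ) (hη : 0 < η) (hμ : 0 < μ)
    (D B : H → H) (hD : Cocoercive η D) (hB : Cocoercive μ B)
    (hC : {q : H | B q = 0}.Nonempty)
    (lam beta : ℝ → ℝ)
    (hlam_pos : ∀ t : ℝ, 0 ≤ t → 0 < lam t) (hbeta_pos : ∀ t : ℝ, 0 ≤ t → 0 < beta t)
    (hH1 : ∀ b > (0:ℝ), ContinuousOn lam (Set.Icc 0 b) ∧ ContinuousOn beta (Set.Icc 0 b))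
    (hls : limsup (fun t => ((lam t * beta t : ℝ) : EReal)) atTop < ((2 * μ : ℝ) : EReal))
    (x₀ : H) (x xd : ℝ → H)
    (hsol : IsStrongGlobalSolution A D B lam beta x₀ x xd)
    (z v : H) (hz : z ∈ {q : H | B q = 0}) (hv : v ∈ A z) :
    ∃ a > (0:ℝ), ∃ b > (0:ℝ), ∃ t₀ > (0:ℝ),
      ∀ᵐ t ∂(volume.restrict (Set.Ici t₀)),
        2 * ⟪xd t, x t - z⟫ +
            a * (‖xd t‖ ^ 2 + lam t * beta t * ⟪x t - z, B (x t)⟫ +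
              lam t * beta t * ‖B (x t)‖ ^ 2) ≤
          (b * lam t ^ 2 - 2 * η * lam t) * ‖D (x t) - D z‖ ^ 2 +
            2 * lam t * ⟪z - x t, v + D z⟫ + b * lam t ^ 2 * ‖D z + v‖ ^ 2 :=
  lemma_fej3_general A hA η μ hμ D B hD hB lam beta hlam_pos hbeta_pos hls x₀ x xd hsol z v hz hv
end

section
/- Assume (H1), let x be a strong global solution of the dynamical system, and assume A is γ-strongly monotone for some γ > 0. Let z, v, p ∈ H with v ∈ Az, p ∈ N_C(z) and v + p + Dz = 0. Then for almost every t ≥ 0 the following inequality holds (in ℝ ∪ {+∞}): 2γλ(t)‖ẋ(t) + x(t) − z‖² + 2⟨ẋ(t), x(t) − z⟩ + λ(t)(2η − 3λ(t))‖D x(t) − D z‖² ≤ 2λ(t)β(t)[ sup_{u ∈ C} φ_B(u, p/β(t)) − σ_C(p/β(t)) ] + 3λ(t)²β(t)²‖B x(t)‖² + 3λ(t)²‖Dz + v‖². -/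
open scoped RealInnerProductSpace Pointwise
open MeasureTheory Filter

variable {H : Type*} [NormedAddCommGroup H] [InnerProductSpace ℝ H]

/-! Put `w = ẋ + x`. The differential inclusion says `(x − λDx − λβBx − w)/λ ∈ A w`, so strong
monotonicity of `A` against `v = −p − Dz ∈ A z` gives
`γλ‖w − z‖² ≤ ⟪w − z, −ẋ − λ(Dx − Dz) − λβBx + λp⟫`. Splitting `w − z = ẋ + (x − z)`, the `ẋ`-terms
are absorbed by Young's inequality, the `D`-term by cocoercivity of `D`, and what remains,
`λ⟪x − z, p − βBx⟫`, is `λβ` times one term of the Fitzpatrick supremum at `z ∈ C` minus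
`σ_C(p/β) = ⟪z, p/β⟫`, the latter because `p` is normal to `C` at `z`. -/

lemma norm_add_add_sq_le {E : Type*} [SeminormedAddCommGroup E] (a b c : E) :
    ‖a + b + c‖ ^ 2 ≤ 3 * (‖a‖ ^ 2 + ‖b‖ ^ 2 + ‖c‖ ^ 2) := by
  nlinarith [norm_add₃_le (a := a) (b := b) (c := c), norm_nonneg (a + b + c),
    sq_nonneg (‖a‖ - ‖b‖), sq_nonneg (‖b‖ - ‖c‖), sq_nonneg (‖a‖ - ‖c‖)]

lemma two_mul_inner_le {c : ℝ} (hc : 0 < c) (d a : H) :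
    2 * ⟪d, a⟫ ≤ c * ‖d‖ ^ 2 + c⁻¹ * ‖a‖ ^ 2 := by
  have h : c * (2 * ⟪d, a⟫) ≤ c * (c * ‖d‖ ^ 2 + c⁻¹ * ‖a‖ ^ 2) := by
    rw [mul_add, ← mul_assoc c c⁻¹, mul_inv_cancel₀ hc.ne', one_mul]
    nlinarith [real_inner_le_norm d a, sq_nonneg (c * ‖d‖ - ‖a‖)]
  exact le_of_mul_le_mul_left h hc

lemma StronglyMonotoneOperator.mul_norm_sq_le_inner {γ lam : ℝ} {A : H → Set H}
    (hA : StronglyMonotoneOperator γ A) (hlam : 0 ≤ lam) {z v y w : H} (hv : v ∈ A z)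
    (hw : y - w ∈ lam • A w) :
    lam * (γ * ‖w - z‖ ^ 2) ≤ ⟪w - z, y - w - lam • v⟫ := by
  obtain ⟨u, hu, hyw⟩ := Set.mem_smul_set.mp hw
  rw [← hyw, ← smul_sub, real_inner_smul_right]
  exact mul_le_mul_of_nonneg_left (hA hu hv) hlam

lemma lyapunov_bound_of_resolvent_ineq {γ η lam β : ℝ} (hlam : 0 ≤ lam) (hβ : β ≠ 0) {D B : H → H}
    (hD : Cocoercive η D) {d X z v p : H}
    (hmono : lam * (γ * ‖d + X - z‖ ^ 2) ≤
      ⟪d + X - z, X - lam • D X - (lam * β) • B X - (d + X) - lam • v⟫)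
    (hzero : v + p + D z = 0) :
    2 * γ * lam * ‖d + X - z‖ ^ 2 + 2 * ⟪d, X - z⟫ + lam * (2 * η - 3 * lam) * ‖D X - D z‖ ^ 2
      ≤ 2 * lam * β * (β⁻¹ * ⟪X - z, p⟫ - ⟪X - z, B X⟫) +
        (3 * lam ^ 2 * β ^ 2 * ‖B X‖ ^ 2 + 3 * lam ^ 2 * ‖D z + v‖ ^ 2) := by
  have hv : v = -(p + D z) := by rw [add_assoc] at hzero; exact eq_neg_of_add_eq_zero_left hzero
  have hDzv : ‖D z + v‖ = ‖p‖ := by rw [hv, show D z + -(p + D z) = -p by abel, norm_neg]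
  set q := -(D X - D z) - β • B X + p
  have hsplit : X - lam • D X - (lam * β) • B X - (d + X) - lam • v = -d + lam • q := by
    rw [hv]; module
  have hexpand : ⟪d + X - z, -d + lam • q⟫ = -‖d‖ ^ 2 - ⟪d, X - z⟫ + ⟪d, lam • q⟫ +
      lam * (⟪X - z, p⟫ - ⟪X - z, D X - D z⟫ - β * ⟪X - z, B X⟫) := by
    simp only [q, add_sub_assoc d X z, inner_add_left, inner_add_right, inner_sub_right,
      inner_neg_right, real_inner_smul_right, real_inner_self_eq_norm_sq, real_inner_comm d]
    ring
  have hyoung : 2 * ⟪d, lam • q⟫ ≤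
      2 * ‖d‖ ^ 2 + 3 / 2 * lam ^ 2 * (‖D X - D z‖ ^ 2 + β ^ 2 * ‖B X‖ ^ 2 + ‖p‖ ^ 2) := by
    have hq := norm_add_add_sq_le (-(D X - D z)) (-(β • B X)) p
    rw [norm_neg, norm_neg, norm_smul, Real.norm_eq_abs, mul_pow, sq_abs,
      ← sub_eq_add_neg] at hq
    have := two_mul_inner_le two_pos d (lam • q)
    rw [norm_smul, Real.norm_eq_abs, mul_pow, sq_abs] at this
    nlinarith [sq_nonneg lam]
  have hco := mul_le_mul_of_nonneg_left (hD X z) hlam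
  have hrhs : 2 * lam * β * (β⁻¹ * ⟪X - z, p⟫ - ⟪X - z, B X⟫) =
      2 * lam * (⟪X - z, p⟫ - β * ⟪X - z, B X⟫) := by field_simp
  rw [hsplit, hexpand] at hmono
  rw [hrhs, hDzv]
  have hDD : 0 ≤ lam ^ 2 * ‖D X - D z‖ ^ 2 := by positivity
  have hBX : 0 ≤ lam ^ 2 * β ^ 2 * ‖B X‖ ^ 2 := by positivity
  have hp : 0 ≤ lam ^ 2 * ‖p‖ ^ 2 := by positivity
  linear_combination 2 * hmono + hyoung + 2 * hco + 3 / 2 * hDD + 3 / 2 * hBX + 3 / 2 * hp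

lemma smul_mem_normalCone {C : Set H} {z p : H} (hp : p ∈ normalCone C z) {c : ℝ} (hc : 0 ≤ c) :
    c • p ∈ normalCone C z :=
  ⟨hp.1, fun y hy => by
    rw [real_inner_smul_right]; exact mul_nonpos_of_nonneg_of_nonpos hc (hp.2 y hy)⟩

lemma supportFn_eq_inner_of_mem_normalCone {C : Set H} {z p : H} (hp : p ∈ normalCone C z) :
    supportFn C p = ((⟪z, p⟫ : ℝ) : EReal) := by
  refine le_antisymm (iSup₂_le fun y hy => ?_) (le_iSup₂_of_le z hp.1 le_rfl)
  have := hp.2 y hy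
  rw [inner_sub_left] at this
  exact EReal.coe_le_coe_iff.mpr (by linarith)

lemma coe_le_fitzpatrick (B : H → H) (x u y : H) :
    ((⟪x, B y⟫ + ⟪y, u⟫ - ⟪y, B y⟫ : ℝ) : EReal) ≤ fitzpatrick B x u :=
  le_iSup (fun y => ((⟪x, B y⟫ + ⟪y, u⟫ - ⟪y, B y⟫ : ℝ) : EReal)) y

lemma coe_le_iSup_fitzpatrick_sub_supportFn (B : H → H) {C : Set H} {z p : H}
    (hp : p ∈ normalCone C z) {c : ℝ} (hc : 0 ≤ c) (y : H) :
    ((c * ⟪y - z, p⟫ - ⟪y - z, B y⟫ : ℝ) : EReal) ≤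
      (⨆ u ∈ C, fitzpatrick B u (c • p)) - supportFn C (c • p) := by
  rw [supportFn_eq_inner_of_mem_normalCone (smul_mem_normalCone hp hc)]
  have hfitz : ((⟪z, B y⟫ + ⟪y, c • p⟫ - ⟪y, B y⟫ : ℝ) : EReal) ≤
      ⨆ u ∈ C, fitzpatrick B u (c • p) :=
    (coe_le_fitzpatrick B z (c • p) y).trans (le_iSup₂_of_le z hp.1 le_rfl)
  calc ((c * ⟪y - z, p⟫ - ⟪y - z, B y⟫ : ℝ) : EReal)
      = ((⟪z, B y⟫ + ⟪y, c • p⟫ - ⟪y, B y⟫ : ℝ) : EReal) - ((⟪z, c • p⟫ : ℝ) : EReal) := by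
        rw [← EReal.coe_sub]
        congr 1
        simp only [inner_sub_left, real_inner_smul_right]
        ring
    _ ≤ _ := EReal.sub_le_sub hfitz le_rfl

lemma EReal.coe_le_mul_add_of_le {a c g e : ℝ} {G : EReal} (hc : 0 ≤ c) (hg : (g : EReal) ≤ G)
    (h : a ≤ c * g + e) : (a : EReal) ≤ c * G + e :=
  calc (a : EReal) ≤ ((c * g + e : ℝ) : EReal) := EReal.coe_le_coe_iff.mpr h
    _ = c * g + e := rfl
    _ ≤ c * G + e := add_le_add_left (mul_le_mul_of_nonneg_left hg (EReal.coe_nonneg.mpr hc)) _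

theorem lemma_fej1_strongly_monotone_general
    (A : H → Set H)
    (η : ℝ)
    (D B : H → H) (hD : Cocoercive η D)
    (lam beta : ℝ → ℝ)
    (hlam_pos : ∀ t : ℝ, 0 ≤ t → 0 < lam t) (hbeta_pos : ∀ t : ℝ, 0 ≤ t → 0 < beta t)
    (x₀ : H) (x xd : ℝ → H)
    (hsol : IsStrongGlobalSolution A D B lam beta x₀ x xd)
    (γ : ℝ) (hsm : StronglyMonotoneOperator γ A)
    (z v p : H) (hv : v ∈ A z) (hp : p ∈ normalCone {q : H | B q = 0} z)
    (hzero : v + p + D z = 0) :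
    ∀ᵐ t ∂(volume.restrict (Set.Ici (0:ℝ))),
      ((2 * γ * lam t * ‖xd t + x t - z‖ ^ 2 + 2 * ⟪xd t, x t - z⟫ +
          lam t * (2 * η - 3 * lam t) * ‖D (x t) - D z‖ ^ 2 : ℝ) : EReal) ≤
        ((2 * lam t * beta t : ℝ) : EReal) *
          ((⨆ u ∈ {q : H | B q = 0}, fitzpatrick B u ((beta t)⁻¹ • p)) -
            supportFn {q : H | B q = 0} ((beta t)⁻¹ • p)) +
        ((3 * lam t ^ 2 * beta t ^ 2 * ‖B (x t)‖ ^ 2 +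
            3 * lam t ^ 2 * ‖D z + v‖ ^ 2 : ℝ) : EReal) := by
  obtain ⟨-, -, hae⟩ := hsol
  filter_upwards [hae, ae_restrict_mem measurableSet_Ici] with t hsol_t ht
  obtain ⟨-, hres⟩ := hsol_t
  have hlam := hlam_pos t ht
  have hbeta := hbeta_pos t ht
  have hmono := hsm.mul_norm_sq_le_inner hlam.le hv hres
  refine EReal.coe_le_mul_add_of_le (by positivity)
    (coe_le_iSup_fitzpatrick_sub_supportFn B hp (inv_nonneg.mpr hbeta.le) (x t)) ?_
  exact lyapunov_bound_of_resolvent_ineq hlam.le hbeta.ne' hD hmono hzero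

/-- the strengthened Lyapunov inequality (in `ℝ ∪ {+∞}`) when `A` is
`γ`-strongly monotone, for `v ∈ Az`, `p ∈ N_C(z)` with `v + p + Dz = 0`. -/
theorem lemma_fej1_strongly_monotone [CompleteSpace H]
    (A : H → Set H) (hA : MaximallyMonotone A)
    (η μ : ℝ) (hη : 0 < η) (hμ : 0 < μ)
    (D B : H → H) (hD : Cocoercive η D) (hB : Cocoercive μ B)
    (hC : {q : H | B q = 0}.Nonempty)
    (lam beta : ℝ → ℝ)
    (hlam_pos : ∀ t : ℝ, 0 ≤ t → 0 < lam t) (hbeta_pos : ∀ t : ℝ, 0 ≤ t → 0 < beta t)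
    (hH1 : ∀ b > (0:ℝ), ContinuousOn lam (Set.Icc 0 b) ∧ ContinuousOn beta (Set.Icc 0 b))
    (x₀ : H) (x xd : ℝ → H)
    (hsol : IsStrongGlobalSolution A D B lam beta x₀ x xd)
    (γ : ℝ) (hγ : 0 < γ) (hsm : StronglyMonotoneOperator γ A)
    (z v p : H) (hv : v ∈ A z) (hp : p ∈ normalCone {q : H | B q = 0} z)
    (hzero : v + p + D z = 0) :
    ∀ᵐ t ∂(volume.restrict (Set.Ici (0:ℝ))),
      ((2 * γ * lam t * ‖xd t + x t - z‖ ^ 2 + 2 * ⟪xd t, x t - z⟫ +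
          lam t * (2 * η - 3 * lam t) * ‖D (x t) - D z‖ ^ 2 : ℝ) : EReal) ≤
        ((2 * lam t * beta t : ℝ) : EReal) *
          ((⨆ u ∈ {q : H | B q = 0}, fitzpatrick B u ((beta t)⁻¹ • p)) -
            supportFn {q : H | B q = 0} ((beta t)⁻¹ • p)) +
        ((3 * lam t ^ 2 * beta t ^ 2 * ‖B (x t)‖ ^ 2 +
            3 * lam t ^ 2 * ‖D z + v‖ ^ 2 : ℝ) : EReal) :=
  lemma_fej1_strongly_monotone_general A η D B hD lam beta hlam_pos hbeta_pos x₀ x xd hsol γ hsm z v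
    p hv hp hzero
end
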